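/- (Corollary 1, fully correlated fading case.) Fix η ≥ 1 and ℓ > 0. Let γ be a complex random variable with E[|γ|²] = 1 and set γ_i = γ for all i ∈ {1, …, η}, and let φ_1, …, φ_η, θ_1, …, θ_η be random angles, independent of γ, such that almost surely e^{j(φ_i−φ_1)} ≠ 1 or e^{j(θ_i−θ_1)} ≠ 1 for all i ≠ 1. For N_r, N_t ∈ ℕ let P_{N_r,N_t} = |w^* H f|² with H = √(ℓ/η) Σ_{i=1}^{η} γ_i a_{N_r}(φ_i) a_{N_t}(θ_i)^*, w = a_{N_r}(φ_1)/√N_r and f = a_{N_t}(θ_1)/√N_t. Then almost surely P_{N_r,N_t}/(N_r N_t) → ℓ |γ|² / η as N_r, N_t → ∞, and the expectation of this almost-sure limit equals ℓ/η; hence the correction factor Υ equals 1/η. -/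

import Mathlib

open Complex Finset Filter MeasureTheory ProbabilityTheory

/-- Uniform linear array response vector `a_N(φ) = (1, e^{-jφ}, …, e^{-j(N-1)φ})`. -/
noncomputable def ula (N : ℕ) (φ : ℝ) : Fin N → ℂ :=
  fun k => Complex.exp (-(Complex.I) * (k : ℕ) * (φ : ℂ))

noncomputable def Gsum (N : ℕ) (x : ℝ) : ℂ := ∑ k : Fin N, Complex.exp (-(Complex.I) * (k : ℕ) * (x : ℂ))

lemma norm_exp_im (z : ℂ) (hz : z.re = 0) : ‖Complex.exp z‖ = 1 := by
  rw [Complex.norm_exp, hz, Real.exp_zero]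

lemma re_aux (k : ℕ) (x : ℝ) : (-(Complex.I) * (k : ℕ) * (x : ℂ)).re = 0 := by simp

lemma Gsum_eq (N : ℕ) (x : ℝ) :
    Gsum N x = ∑ k ∈ Finset.range N, (Complex.exp (-(Complex.I) * (x : ℂ)))^k := by
  rw [Gsum, Fin.sum_univ_eq_sum_range (fun k : ℕ => Complex.exp (-(Complex.I) * (k : ℕ) * (x : ℂ))) N]
  refine Finset.sum_congr rfl fun k _ => ?_
  rw [← Complex.exp_nat_mul]
  ring_nf

lemma Gsum_zero (N : ℕ) : Gsum N 0 = N := by simp [Gsum]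

lemma norm_Gsum_le (N : ℕ) (x : ℝ) : ‖Gsum N x‖ ≤ N := by
  rw [Gsum]
  calc ‖∑ k : Fin N, Complex.exp (-(Complex.I) * (k : ℕ) * (x : ℂ))‖
      ≤ ∑ k : Fin N, ‖Complex.exp (-(Complex.I) * (k : ℕ) * (x : ℂ))‖ := norm_sum_le _ _
    _ ≤ ∑ _k : Fin N, 1 := Finset.sum_le_sum fun k _ => le_of_eq (norm_exp_im _ (re_aux k x))
    _ = N := by simp

lemma norm_Gsum_le_of_ne (N : ℕ) (x : ℝ) (h : Complex.exp (-(Complex.I) * (x : ℂ)) ≠ 1) :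
    ‖Gsum N x‖ ≤ 2 / ‖1 - Complex.exp (-(Complex.I) * (x : ℂ))‖ := by
  rw [Gsum_eq, geom_sum_eq h, norm_div]
  have h1 : ‖Complex.exp (-(Complex.I) * (x : ℂ)) ^ N - 1‖ ≤ 2 := by
    calc ‖Complex.exp (-(Complex.I) * (x : ℂ)) ^ N - 1‖
        ≤ ‖Complex.exp (-(Complex.I) * (x : ℂ)) ^ N‖ + ‖(1:ℂ)‖ := norm_sub_le _ _
      _ ≤ 2 := by
          rw [norm_pow, norm_exp_im _ (by simpa using re_aux 1 x)]
          norm_num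
  rw [norm_sub_rev (Complex.exp (-(Complex.I) * (x : ℂ))) 1]
  exact div_le_div_of_nonneg_right h1 (norm_nonneg (1 - Complex.exp (-(Complex.I) * (x : ℂ))))

lemma conj_ula_mul (N : ℕ) (x y : ℝ) (a : Fin N) :
    (starRingEnd ℂ) (ula N x a) * ula N y a
      = Complex.exp (-(Complex.I) * (a : ℕ) * (((y - x : ℝ)) : ℂ)) := by
  simp only [ula, ← Complex.exp_conj, map_mul, map_neg, Complex.conj_I, Complex.conj_ofReal,
    map_natCast, ← Complex.exp_add]
  congr 1
  push_cast
  ring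

lemma sum_conj_ula (N : ℕ) (x y : ℝ) :
    ∑ a : Fin N, (starRingEnd ℂ) (ula N x a) * ula N y a = Gsum N (y - x) := by
  rw [Gsum]
  exact Finset.sum_congr rfl fun a _ => conj_ula_mul N x y a

lemma key_sum {Nr Nt η : ℕ} (K g : ℂ) (sr st : ℝ) (φω θω : Fin η → ℝ) (i₀ : Fin η) :
    ∑ a : Fin Nr, ∑ b : Fin Nt,
      (starRingEnd ℂ) (ula Nr (φω i₀) a / (sr : ℂ)) *
        (K * ∑ i, g * ula Nr (φω i) a * (starRingEnd ℂ) (ula Nt (θω i) b)) *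
        (ula Nt (θω i₀) b / (st : ℂ))
      = K * g / ((sr : ℂ) * (st : ℂ)) *
          ∑ i, Gsum Nr (φω i - φω i₀) * Gsum Nt (θω i₀ - θω i) := by
  have hpoint : ∀ i, Gsum Nr (φω i - φω i₀) * Gsum Nt (θω i₀ - θω i)
      = (∑ a : Fin Nr, (starRingEnd ℂ) (ula Nr (φω i₀) a) * ula Nr (φω i) a) *
        (∑ b : Fin Nt, (starRingEnd ℂ) (ula Nt (θω i) b) * ula Nt (θω i₀) b) := by
    intro i
    rw [sum_conj_ula, sum_conj_ula]
  conv_rhs => rw [Finset.mul_sum]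
  simp only [hpoint, Finset.sum_mul_sum]
  simp only [Finset.mul_sum, Finset.sum_mul, map_div₀, Complex.conj_ofReal]
  have swap : ∀ (f : Fin Nr → Fin Nt → Fin η → ℂ),
      ∑ a : Fin Nr, ∑ b : Fin Nt, ∑ i : Fin η, f a b i
        = ∑ i : Fin η, ∑ a : Fin Nr, ∑ b : Fin Nt, f a b i := by
    intro f
    have h1 : ∀ a : Fin Nr, ∑ b : Fin Nt, ∑ i : Fin η, f a b i
        = ∑ i : Fin η, ∑ b : Fin Nt, f a b i := fun a => Finset.sum_comm
    simp only [h1]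
    exact Finset.sum_comm
  rw [swap]
  refine Finset.sum_congr rfl fun i _ => ?_
  refine Finset.sum_congr rfl fun a _ => ?_
  refine Finset.sum_congr rfl fun b _ => ?_
  ring

lemma exp_neg_ne_one {z : ℂ} (h : Complex.exp z ≠ 1) : Complex.exp (-z) ≠ 1 := by
  rw [Complex.exp_neg]
  intro hc
  exact h (by rwa [inv_eq_one] at hc)

lemma main_tendsto {η : ℕ} (hη : 0 < η) (ℓ : ℝ) (hℓ : 0 < ℓ) (g : ℂ)
    (φω θω : Fin η → ℝ)
    (hang : ∀ i : Fin η, i ≠ ⟨0, hη⟩ →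
      Complex.exp (Complex.I * ((φω i : ℂ) - (φω ⟨0, hη⟩ : ℂ))) ≠ 1 ∨
      Complex.exp (Complex.I * ((θω i : ℂ) - (θω ⟨0, hη⟩ : ℂ))) ≠ 1) :
    Tendsto (fun p : ℕ × ℕ =>
      ‖∑ a : Fin p.1, ∑ b : Fin p.2,
        (starRingEnd ℂ) (ula p.1 (φω ⟨0, hη⟩) a / (Real.sqrt p.1 : ℂ)) *
        ((Real.sqrt (ℓ / η) : ℂ) *
          ∑ i, g * ula p.1 (φω i) a * (starRingEnd ℂ) (ula p.2 (θω i) b)) *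
        (ula p.2 (θω ⟨0, hη⟩) b / (Real.sqrt p.2 : ℂ))‖ ^ 2 / ((p.1 : ℝ) * (p.2 : ℝ)))
      (atTop ×ˢ atTop) (nhds (ℓ * ‖g‖ ^ 2 / η)) := by
  set i₀ : Fin η := ⟨0, hη⟩ with hi₀
  set S : ℕ × ℕ → ℂ := fun p =>
    (∑ i, Gsum p.1 (φω i - φω i₀) * Gsum p.2 (θω i₀ - θω i)) / ((p.1 : ℂ) * (p.2 : ℂ)) with hSdef
  have hev : ∀ᶠ p : ℕ × ℕ in atTop ×ˢ atTop, 1 ≤ p.1 ∧ 1 ≤ p.2 :=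
    (tendsto_fst.eventually (eventually_ge_atTop 1)).and
      (tendsto_snd.eventually (eventually_ge_atTop 1))
  -- Step A : S → 1
  have hS : Tendsto S (atTop ×ˢ atTop) (nhds 1) := by
    have hsplit : S = fun p => ∑ i, Gsum p.1 (φω i - φω i₀) * Gsum p.2 (θω i₀ - θω i)
        / ((p.1 : ℂ) * (p.2 : ℂ)) := by
      funext p; rw [hSdef]; exact Finset.sum_div _ _ _
    rw [hsplit]
    have hlim : (1 : ℂ) = ∑ i : Fin η, (if i = i₀ then (1:ℂ) else 0) := by
      rw [Finset.sum_ite_eq' Finset.univ i₀ (fun _ => (1:ℂ))]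
      simp
    rw [hlim]
    refine tendsto_finset_sum _ fun i _ => ?_
    by_cases hii : i = i₀
    · subst hii
      simp only [if_pos rfl, ↓reduceIte]
      refine Tendsto.congr' ?_ tendsto_const_nhds
      filter_upwards [hev] with p hp
      have h1 : ((p.1 : ℂ)) ≠ 0 := Nat.cast_ne_zero.mpr (by omega)
      have h2 : ((p.2 : ℂ)) ≠ 0 := Nat.cast_ne_zero.mpr (by omega)
      rw [sub_self, sub_self, Gsum_zero, Gsum_zero]
      field_simp
    · simp only [if_neg hii]
      rcases hang i hii with hφ | hθ
      · -- bounded in φ direction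
        have hr : Complex.exp (-(Complex.I) * (((φω i - φω i₀ : ℝ)) : ℂ)) ≠ 1 := by
          have := exp_neg_ne_one hφ
          convert this using 2
          push_cast
          ring
        set C : ℝ := 2 / ‖1 - Complex.exp (-(Complex.I) * (((φω i - φω i₀ : ℝ)) : ℂ))‖ with hC
        refine squeeze_zero_norm' ?_
          ((tendsto_const_div_atTop_nhds_zero_nat C).comp tendsto_fst)
        filter_upwards [hev] with p hp
        have hp1 : (0:ℝ) < p.1 := by exact_mod_cast hp.1
        have hp2 : (0:ℝ) < p.2 := by exact_mod_cast hp.2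
        have heq : ‖Gsum p.1 (φω i - φω i₀) * Gsum p.2 (θω i₀ - θω i) / ((p.1 : ℂ) * (p.2 : ℂ))‖
            = (‖Gsum p.1 (φω i - φω i₀)‖ / p.1) * (‖Gsum p.2 (θω i₀ - θω i)‖ / p.2) := by
          rw [norm_div, norm_mul, norm_mul, Complex.norm_natCast, Complex.norm_natCast,
            div_mul_div_comm]
        rw [heq]
        have hb1 : ‖Gsum p.1 (φω i - φω i₀)‖ / (p.1 : ℝ) ≤ C / p.1 :=
          div_le_div_of_nonneg_right (norm_Gsum_le_of_ne _ _ hr) hp1.le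
        have hb2 : ‖Gsum p.2 (θω i₀ - θω i)‖ / (p.2 : ℝ) ≤ 1 :=
          (div_le_one hp2).mpr (norm_Gsum_le _ _)
        calc (‖Gsum p.1 (φω i - φω i₀)‖ / p.1) * (‖Gsum p.2 (θω i₀ - θω i)‖ / p.2)
            ≤ (C / p.1) * 1 := by
              refine mul_le_mul hb1 hb2 (by positivity) ?_
              have : (0:ℝ) ≤ ‖Gsum p.1 (φω i - φω i₀)‖ / p.1 := by positivity
              calc (0:ℝ) ≤ ‖Gsum p.1 (φω i - φω i₀)‖ / p.1 := this
                _ ≤ C / p.1 := hb1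
          _ = C / p.1 := mul_one _
      · -- bounded in θ direction
        have hr : Complex.exp (-(Complex.I) * (((θω i₀ - θω i : ℝ)) : ℂ)) ≠ 1 := by
          convert hθ using 2
          push_cast
          ring
        set C : ℝ := 2 / ‖1 - Complex.exp (-(Complex.I) * (((θω i₀ - θω i : ℝ)) : ℂ))‖ with hC
        refine squeeze_zero_norm' ?_
          ((tendsto_const_div_atTop_nhds_zero_nat C).comp tendsto_snd)
        filter_upwards [hev] with p hp
        have hp1 : (0:ℝ) < p.1 := by exact_mod_cast hp.1
        have hp2 : (0:ℝ) < p.2 := by exact_mod_cast hp.2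
        have heq : ‖Gsum p.1 (φω i - φω i₀) * Gsum p.2 (θω i₀ - θω i) / ((p.1 : ℂ) * (p.2 : ℂ))‖
            = (‖Gsum p.1 (φω i - φω i₀)‖ / p.1) * (‖Gsum p.2 (θω i₀ - θω i)‖ / p.2) := by
          rw [norm_div, norm_mul, norm_mul, Complex.norm_natCast, Complex.norm_natCast,
            div_mul_div_comm]
        rw [heq]
        have hb1 : ‖Gsum p.1 (φω i - φω i₀)‖ / (p.1 : ℝ) ≤ 1 :=
          (div_le_one hp1).mpr (norm_Gsum_le _ _)
        have hb2 : ‖Gsum p.2 (θω i₀ - θω i)‖ / (p.2 : ℝ) ≤ C / p.2 :=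
          div_le_div_of_nonneg_right (norm_Gsum_le_of_ne _ _ hr) hp2.le
        calc (‖Gsum p.1 (φω i - φω i₀)‖ / p.1) * (‖Gsum p.2 (θω i₀ - θω i)‖ / p.2)
            ≤ 1 * (C / p.2) := by
              refine mul_le_mul hb1 hb2 (by positivity) (by norm_num)
          _ = C / p.2 := one_mul _
  -- Step B + C
  have hfin : Tendsto (fun p : ℕ × ℕ => (ℓ / η * ‖g‖ ^ 2) * ‖S p‖ ^ 2)
      (atTop ×ˢ atTop) (nhds (ℓ * ‖g‖ ^ 2 / η)) := by
    have := ((hS.norm).pow 2).const_mul (ℓ / η * ‖g‖ ^ 2)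
    simp only [norm_one, one_pow, mul_one] at this
    convert this using 2
    ring
  refine Tendsto.congr' ?_ hfin
  filter_upwards [hev] with p hp
  have hp1 : (0:ℝ) < p.1 := by exact_mod_cast hp.1
  have hp2 : (0:ℝ) < p.2 := by exact_mod_cast hp.2
  rw [key_sum]
  have hlη : (0:ℝ) ≤ ℓ / η := by positivity
  rw [hSdef]
  simp only [norm_mul, norm_div, Complex.norm_natCast, Complex.norm_real, Real.norm_eq_abs]
  rw [_root_.abs_of_nonneg (Real.sqrt_nonneg (ℓ / (η:ℝ))),
    _root_.abs_of_nonneg (Real.sqrt_nonneg ((p.1:ℝ))),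
    _root_.abs_of_nonneg (Real.sqrt_nonneg ((p.2:ℝ)))]
  have e1 : Real.sqrt (ℓ / (η:ℝ)) ^ 2 = ℓ / η := Real.sq_sqrt hlη
  have e2 : Real.sqrt ((p.1:ℝ)) ^ 2 = (p.1:ℝ) := Real.sq_sqrt hp1.le
  have e3 : Real.sqrt ((p.2:ℝ)) ^ 2 = (p.2:ℝ) := Real.sq_sqrt hp2.le
  simp only [mul_pow, div_pow, e1, e2, e3]
  field_simp
  try ring
  try simp
  try tauto
theorem correction_factor_fully_correlated_fading
    {Ω : Type*} [MeasurableSpace Ω] (μ : Measure Ω) [IsProbabilityMeasure μ]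
    (η : ℕ) (hη : 0 < η) (ℓ : ℝ) (hℓ : 0 < ℓ)
    (γ₀ : Ω → ℂ) (hγm : Measurable γ₀) (hγ2 : ∫ ω, ‖γ₀ ω‖ ^ 2 ∂μ = 1)
    (γ : Fin η → Ω → ℂ) (hγ : ∀ i, γ i = γ₀)
    (φ θ : Fin η → Ω → ℝ)
    (hφm : ∀ i, Measurable (φ i)) (hθm : ∀ i, Measurable (θ i))
    (hindep : IndepFun γ₀
      (fun ω => ((fun i => φ i ω), (fun i => θ i ω))) μ)
    (hangles : ∀ᵐ ω ∂μ, ∀ i : Fin η, i ≠ ⟨0, hη⟩ →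
      Complex.exp (Complex.I * ((φ i ω : ℂ) - (φ ⟨0, hη⟩ ω : ℂ))) ≠ 1 ∨
      Complex.exp (Complex.I * ((θ i ω : ℂ) - (θ ⟨0, hη⟩ ω : ℂ))) ≠ 1)
    (H : (Nr : ℕ) → (Nt : ℕ) → Ω → Fin Nr → Fin Nt → ℂ)
    (hH : ∀ Nr Nt ω, H Nr Nt ω = fun a b => (Real.sqrt (ℓ / η) : ℂ) *
      ∑ i, γ i ω * ula Nr (φ i ω) a * (starRingEnd ℂ) (ula Nt (θ i ω) b))
    (P : ℕ → ℕ → Ω → ℝ)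
    (hP : ∀ Nr Nt ω, P Nr Nt ω =
      ‖∑ a, ∑ b, (starRingEnd ℂ) (ula Nr (φ ⟨0, hη⟩ ω) a / (Real.sqrt Nr : ℂ)) *
        H Nr Nt ω a b * (ula Nt (θ ⟨0, hη⟩ ω) b / (Real.sqrt Nt : ℂ))‖ ^ 2) :
    (∀ᵐ ω ∂μ, Tendsto (fun p : ℕ × ℕ => P p.1 p.2 ω / ((p.1 : ℝ) * (p.2 : ℝ)))
        (atTop ×ˢ atTop) (nhds (ℓ * ‖γ₀ ω‖ ^ 2 / η))) ∧
    (∫ ω, ℓ * ‖γ₀ ω‖ ^ 2 / η ∂μ = ℓ / η) ∧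
    ((∫ ω, ℓ * ‖γ₀ ω‖ ^ 2 / η ∂μ) / ℓ = 1 / η) := by
  have hint : ∫ ω, ℓ * ‖γ₀ ω‖ ^ 2 / η ∂μ = ℓ / η := by
    have hfun : (fun ω => ℓ * ‖γ₀ ω‖ ^ 2 / η) = fun ω => (ℓ / η) * ‖γ₀ ω‖ ^ 2 := by
      funext ω; ring
    rw [hfun, MeasureTheory.integral_const_mul, hγ2, mul_one]
  refine ⟨?_, hint, ?_⟩
  · filter_upwards [hangles] with ω hω
    have h := main_tendsto hη ℓ hℓ (γ₀ ω) (fun i => φ i ω) (fun i => θ i ω) hω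
    refine h.congr fun p => ?_
    simp only [hP, hH, hγ]
  · rw [hint]
    have hη' : (η : ℝ) ≠ 0 := Nat.cast_ne_zero.mpr hη.ne'
    field_simp
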